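/- arXiv:1606.08827 — 2 statements merged into one kernel-verified Lean document; each statement's English description precedes it below -/
import Mathlib

section
/- Every graph with no induced subgraph isomorphic to the three-edge path P4 is perfect. -/
open SimpleGraph

/-- The clique number of a graph: the largest size of a clique. -/
noncomputable def cliqueNumber {V : Type*} [Fintype V] (G : SimpleGraph V) : ℕ :=
  sSup {n | ∃ s : Finset V, G.IsNClique n s}

/-- A graph is perfect if every induced subgraph has chromatic number
equal to its clique number. -/
def IsPerfect {V : Type*} [Fintype V] (G : SimpleGraph V) : Prop :=
  ∀ s : Finset V,
    (G.induce (↑s : Set V)).chromaticNumber = (cliqueNumber (G.induce (↑s : Set V)) : ℕ∞)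

/-! Seinsche's argument. Suppose a maximal independent set `S` and a maximal clique `K` of
a `P₄`-free graph are disjoint. Choose `s ∈ S` whose set of neighbours in `K` is maximal under
inclusion, `k₀ ∈ K` not adjacent to `s`, a neighbour `s' ∈ S` of `k₀`, and, by the choice of
`s`, some `k₁ ∈ K` adjacent to `s` but not to `s'`: then `s k₁ k₀ s'` is an induced `P₄`. So
deleting a maximal independent set lowers the clique number, and giving it one new colour shows
`χ ≤ ω` by induction on the number of vertices; `P₄`-freeness passes to induced subgraphs. -/

theorem Maximal.nonempty_of_singleton {V : Type*} {P : Set V → Prop} {s : Set V}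
    (hs : Maximal P s) {v : V} (hv : P {v}) : s.Nonempty := by
  rw [Set.nonempty_iff_ne_empty]
  rintro rfl
  exact hs.2 hv (Set.empty_subset _) rfl

namespace SimpleGraph

variable {V : Type*} {G : SimpleGraph V}

theorem nonempty_pathGraph_four_embedding {a b c d : V}
    (hab : G.Adj a b) (hbc : G.Adj b c) (hcd : G.Adj c d)
    (hac : ¬ G.Adj a c) (hbd : ¬ G.Adj b d) (had : ¬ G.Adj a d) :
    Nonempty (pathGraph 4 ↪g G) := by
  have hac' : a ≠ c := by rintro rfl; exact had hcd
  have had' : a ≠ d := by rintro rfl; exact hac hcd.symm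
  have hbd' : b ≠ d := by rintro rfl; exact had hab
  refine ⟨⟨⟨![a, b, c, d], fun i j hij => ?_⟩, fun {i j} => ?_⟩⟩
  · fin_cases i <;> fin_cases j <;> simp_all [G.ne_of_adj hab, G.ne_of_adj hbc, G.ne_of_adj hcd]
  · fin_cases i <;> fin_cases j <;> simp [pathGraph_adj, G.adj_comm] <;> tauto

theorem isEmpty_embedding_induce {W : Type*} {H : SimpleGraph W} (h : IsEmpty (H ↪g G))
    (s : Set V) : IsEmpty (H ↪g G.induce s) :=
  ⟨fun f => h.false ((Embedding.induce s).comp f)⟩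

theorem Maximal.exists_adj_of_isIndepSet {S : Set V} (hS : Maximal G.IsIndepSet S) {v : V}
    (hv : v ∉ S) : ∃ s ∈ S, G.Adj v s := by
  by_contra! h
  have hins : G.IsIndepSet (insert v S) :=
    hS.1.insert fun s hs _ => ⟨h s hs, fun h' => h s hs h'.symm⟩
  exact hv (hS.2 hins (Set.subset_insert _ _) (Set.mem_insert _ _))

theorem Maximal.exists_not_adj_of_isClique {K : Set V} (hK : Maximal G.IsClique K) {v : V}
    (hv : v ∉ K) : ∃ k ∈ K, ¬ G.Adj v k := by
  by_contra! h
  exact hv (hK.2 (hK.1.insert fun k hk _ => h k hk) (Set.subset_insert _ _) (Set.mem_insert _ _))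

theorem inter_nonempty_of_maximal_isIndepSet_of_maximal_isClique [Finite V] [Nonempty V]
    (hfree : IsEmpty (pathGraph 4 ↪g G)) {S K : Set V}
    (hS : Maximal G.IsIndepSet S) (hK : Maximal G.IsClique K) : (S ∩ K).Nonempty := by
  by_contra hdisj
  have hKS : ∀ k ∈ K, k ∉ S := fun k hk hkS => hdisj ⟨k, hkS, hk⟩
  obtain ⟨k, hk⟩ := hK.nonempty_of_singleton (v := Classical.arbitrary V)
    (isClique_singleton _)
  obtain ⟨s₀, hs₀, -⟩ := hS.exists_adj_of_isIndepSet (hKS k hk)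
  obtain ⟨s, hs, hsmax⟩ := Set.Finite.exists_maximalFor (fun v => G.neighborSet v ∩ K) S
    S.toFinite ⟨s₀, hs₀⟩
  obtain ⟨k₀, hk₀, hsk₀⟩ := hK.exists_not_adj_of_isClique fun hsK => hKS s hsK hs
  obtain ⟨s', hs', hk₀s'⟩ := hS.exists_adj_of_isIndepSet (hKS k₀ hk₀)
  have hnsub : ¬ G.neighborSet s ∩ K ⊆ G.neighborSet s' ∩ K :=
    fun hsub => hsk₀ (hsmax hs' hsub ⟨hk₀s'.symm, hk₀⟩).1
  obtain ⟨k₁, ⟨hsk₁, hk₁⟩, hs'k₁⟩ := Set.not_subset.mp hnsub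
  have hss' : ¬ G.Adj s s' := hS.1 hs hs' (by rintro rfl; exact hsk₀ hk₀s'.symm)
  have hk₁k₀ : G.Adj k₁ k₀ := hK.1 hk₁ hk₀ (by rintro rfl; exact hsk₀ hsk₁)
  exact hfree.false <| Classical.choice <| nonempty_pathGraph_four_embedding hsk₁ hk₁k₀ hk₀s'
    hsk₀ (fun h => hs'k₁ ⟨h.symm, hk₁⟩) hss'

theorem IsIndepSet.colorable_succ_of_induce_compl {S : Set V} (hS : G.IsIndepSet S) {n : ℕ}
    (h : (G.induce Sᶜ).Colorable n) : G.Colorable (n + 1) := by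
  classical
  obtain ⟨c⟩ := h
  let C : G.Coloring (Option (Fin n)) := Coloring.mk
    (fun v => if hv : v ∈ S then none else some (c ⟨v, hv⟩))
    fun {v w} hvw hcol => by
      by_cases hv : v ∈ S <;> by_cases hw : w ∈ S <;>
        simp only [hv, hw, dite_true, dite_false, reduceCtorEq, Option.some_inj] at hcol
      · exact hS hv hw (G.ne_of_adj hvw) hvw
      · exact c.valid (show (G.induce Sᶜ).Adj ⟨v, hv⟩ ⟨w, hw⟩ from hvw) hcol
  simpa using C.colorable

theorem IsClique.ncard_le_cliqueNum [Finite V] {s : Set V} (hs : G.IsClique s) :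
    s.ncard ≤ G.cliqueNum := by
  have := Fintype.ofFinite s
  rw [Set.ncard_eq_toFinset_card']
  exact IsClique.card_le_cliqueNum (tc := by simpa using hs)

theorem cliqueNum_induce_compl_lt [Finite V] [Nonempty V] (hfree : IsEmpty (pathGraph 4 ↪g G))
    {S : Set V} (hS : Maximal G.IsIndepSet S) : (G.induce Sᶜ).cliqueNum < G.cliqueNum := by
  obtain ⟨t, ht⟩ := (G.induce Sᶜ).exists_isNClique_cliqueNum
  rw [isNClique_induce_iff] at ht
  obtain ⟨K, htK, hK⟩ := Finite.exists_le_maximal (p := G.IsClique) ht.isClique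
  obtain ⟨x, hxS, hxK⟩ := inter_nonempty_of_maximal_isIndepSet_of_maximal_isClique hfree hS hK
  have hxt : x ∉ (t.map (.subtype _) : Set V) := by simp [hxS]
  calc (G.induce Sᶜ).cliqueNum
      = (t.map (.subtype _) : Set V).ncard := by rw [Set.ncard_coe_finset, ht.card_eq]
    _ < K.ncard := Set.ncard_lt_ncard ((Set.ssubset_iff_of_subset htK).mpr ⟨x, hxK, hxt⟩)
    _ ≤ G.cliqueNum := hK.1.ncard_le_cliqueNum

theorem colorable_cliqueNum_of_isEmpty_pathGraph_four_embedding [Finite V]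
    (hfree : IsEmpty (pathGraph 4 ↪g G)) : G.Colorable G.cliqueNum := by
  induction hcard : Nat.card V using Nat.strong_induction_on generalizing V with
  | _ n ih =>
  cases isEmpty_or_nonempty V
  · exact .of_isEmpty _
  obtain ⟨S, -, hS⟩ := Finite.exists_le_maximal (p := G.IsIndepSet) (a := ∅) (by simp)
  have hS_ne : S.Nonempty := hS.nonempty_of_singleton (v := Classical.arbitrary V) (by simp)
  have hcard_lt : Nat.card (Sᶜ : Set V) < n := by
    rw [← hcard, Nat.card_coe_set_eq]
    exact Set.ncard_lt_card (Set.compl_ne_univ.mpr hS_ne)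
  have hcol := ih _ hcard_lt (G := G.induce Sᶜ) (isEmpty_embedding_induce hfree _) rfl
  exact (hS.1.colorable_succ_of_induce_compl hcol).mono (cliqueNum_induce_compl_lt hfree hS)

end SimpleGraph

theorem p4_free_perfect {V : Type*} [Fintype V] (G : SimpleGraph V)
    (hfree : IsEmpty (pathGraph 4 ↪g G)) :
    IsPerfect G := by
  intro s
  have hfree_s := isEmpty_embedding_induce hfree (s : Set V)
  -- `cliqueNumber` unfolds to Mathlib's `cliqueNum`
  exact le_antisymm
    (colorable_cliqueNum_of_isEmpty_pathGraph_four_embedding hfree_s).chromaticNumber_le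
    cliqueNum_le_chromaticNumber
end

section
/- If a graph G is 2-narrow, then G contains a clique or a stable set of size at least |V(G)|^(1/4). -/
open SimpleGraph

/-- A function `f : V(G) → [0,1]` is good if its sum over the vertex set of every
perfect induced subgraph of `G` is at most 1. -/
def Good {V : Type*} [Fintype V] (G : SimpleGraph V) (f : V → ℝ) : Prop :=
  (∀ v, f v ∈ Set.Icc (0 : ℝ) 1) ∧
  ∀ s : Finset V, IsPerfect (G.induce (↑s : Set V)) → ∑ v ∈ s, f v ≤ 1

/-- For `α ≥ 1`, a graph `G` is `α`-narrow if `∑ f(v)^α ≤ 1` for every good `f`. -/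
def IsNarrow {V : Type*} [Fintype V] (α : ℝ) (G : SimpleGraph V) : Prop :=
  ∀ f : V → ℝ, Good G f → ∑ v, (f v) ^ α ≤ 1

/-! A perfect graph has at most `ω · α` vertices, since it is `ω`-colourable and every colour
class is a stable set. Hence, if `m` is the largest size of a clique or stable set of `G`, every
perfect induced subgraph has at most `m²` vertices, so the constant function `1 / m²` is good,
and 2-narrowness gives `|V| / m⁴ ≤ 1`. -/

open Finset

namespace SimpleGraph

variable {V : Type*} {G : SimpleGraph V}

lemma compl_induce (s : Set V) : (G.induce s)ᶜ = Gᶜ.induce s := by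
  ext a b
  simp [Subtype.ext_iff]

lemma indepNum_induce_le [Finite V] (s : Set V) : (G.induce s).indepNum ≤ G.indepNum := by
  simpa only [← cliqueNum_compl, compl_induce] using Gᶜ.cliqueNum_induce_le s

lemma Coloring.card_le_mul_indepNum [Fintype V] {α : Type*} [Fintype α] (C : G.Coloring α) :
    Fintype.card V ≤ Fintype.card α * G.indepNum := by
  classical
  calc Fintype.card V = ∑ c, #{v | C v = c} := card_eq_sum_card_fiberwise (by simp)
    _ ≤ ∑ _c : α, G.indepNum := sum_le_sum fun c _ ↦
        IsIndepSet.card_le_indepNum (by simpa [Coloring.colorClass] using C.isIndepSet_colorClass c)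
    _ = Fintype.card α * G.indepNum := by simp

lemma card_le_cliqueNum_mul_indepNum_of_chromaticNumber_le [Fintype V]
    (h : G.chromaticNumber ≤ G.cliqueNum) : Fintype.card V ≤ G.cliqueNum * G.indepNum := by
  obtain ⟨C⟩ := chromaticNumber_le_iff_colorable.mp h
  simpa using C.card_le_mul_indepNum

noncomputable def homogeneousNum (G : SimpleGraph V) : ℕ := max G.cliqueNum G.indepNum

lemma exists_card_eq_homogeneousNum (G : SimpleGraph V) :
    ∃ s : Finset V, (G.IsClique s ∨ Gᶜ.IsClique s) ∧ #s = G.homogeneousNum := by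
  obtain ⟨c, hc⟩ := G.exists_isNClique_cliqueNum
  obtain ⟨t, ht⟩ := G.exists_isNIndepSet_indepNum
  rcases le_total G.indepNum G.cliqueNum with h | h
  · exact ⟨c, .inl hc.isClique, by rw [hc.card_eq, homogeneousNum, max_eq_left h]⟩
  · exact ⟨t, .inr (G.isClique_compl.mpr ht.isIndepSet),
      by rw [ht.card_eq, homogeneousNum, max_eq_right h]⟩

lemma one_le_homogeneousNum [Finite V] [Nonempty V] : 1 ≤ G.homogeneousNum := by
  obtain ⟨v⟩ := ‹Nonempty V›
  have : #{v} ≤ G.cliqueNum := IsClique.card_le_cliqueNum (tc := by simp)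
  exact le_max_of_le_left (by simpa using this)

lemma cliqueNum_mul_indepNum_le_homogeneousNum_sq :
    G.cliqueNum * G.indepNum ≤ G.homogeneousNum ^ 2 := by
  rw [sq]
  exact Nat.mul_le_mul (le_max_left _ _) (le_max_right _ _)

end SimpleGraph

section

variable {V : Type*} [Fintype V] {G : SimpleGraph V}

lemma cliqueNumber_eq_cliqueNum (G : SimpleGraph V) : cliqueNumber G = G.cliqueNum := rfl

lemma IsPerfect.card_le_cliqueNum_mul_indepNum (hG : IsPerfect G) :
    Fintype.card V ≤ G.cliqueNum * G.indepNum := by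
  refine card_le_cliqueNum_mul_indepNum_of_chromaticNumber_le ?_
  have h := hG univ
  rw [cliqueNumber_eq_cliqueNum, coe_univ, chromaticNumber_congr G.induceUnivIso] at h
  exact h.trans_le (by exact_mod_cast cliqueNum_induce_le _)

lemma card_le_homogeneousNum_sq_of_isPerfect_induce {s : Finset V}
    (hs : IsPerfect (G.induce (s : Set V))) : #s ≤ G.homogeneousNum ^ 2 :=
  calc #s = Fintype.card (s : Set V) := by simp
    _ ≤ (G.induce s).cliqueNum * (G.induce s).indepNum := hs.card_le_cliqueNum_mul_indepNum
    _ ≤ G.cliqueNum * G.indepNum := Nat.mul_le_mul (cliqueNum_induce_le _) (indepNum_induce_le _)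
    _ ≤ G.homogeneousNum ^ 2 := cliqueNum_mul_indepNum_le_homogeneousNum_sq

lemma good_const_inv_homogeneousNum_sq : Good G fun _ ↦ ((G.homogeneousNum : ℝ) ^ 2)⁻¹ := by
  refine ⟨fun v ↦ ⟨by positivity, ?_⟩, fun s hs ↦ ?_⟩
  · have : Nonempty V := ⟨v⟩
    exact inv_le_one_of_one_le₀ (one_le_pow₀ (by exact_mod_cast one_le_homogeneousNum))
  · rw [sum_const, nsmul_eq_mul, ← div_eq_mul_inv]
    exact div_le_one_of_le₀ (by exact_mod_cast card_le_homogeneousNum_sq_of_isPerfect_induce hs)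
      (by positivity)

lemma IsNarrow.card_le_homogeneousNum_pow_four (hG : IsNarrow 2 G) :
    Fintype.card V ≤ G.homogeneousNum ^ 4 := by
  cases isEmpty_or_nonempty V
  · simp
  have hm : (0 : ℝ) < G.homogeneousNum ^ 4 := by
    have := one_le_homogeneousNum (G := G)
    positivity
  have h := hG _ good_const_inv_homogeneousNum_sq
  simp only [Real.rpow_two, inv_pow, ← pow_mul, sum_const, card_univ, nsmul_eq_mul] at h
  exact_mod_cast (div_le_one hm).mp h

end

theorem two_narrow_clique_or_stable {V : Type*} [Fintype V] (G : SimpleGraph V)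
    (hnarrow : IsNarrow 2 G) :
    ∃ s : Finset V, (G.IsClique (↑s : Set V) ∨ Gᶜ.IsClique (↑s : Set V)) ∧
      (Fintype.card V : ℝ) ^ ((1 : ℝ) / 4) ≤ s.card := by
  obtain ⟨s, hs, hcard⟩ := G.exists_card_eq_homogeneousNum
  refine ⟨s, hs, ?_⟩
  have h : (Fintype.card V : ℝ) ≤ (s.card : ℝ) ^ 4 := by
    exact_mod_cast hcard ▸ hnarrow.card_le_homogeneousNum_pow_four
  calc (Fintype.card V : ℝ) ^ ((1 : ℝ) / 4) ≤ ((s.card : ℝ) ^ 4) ^ ((4 : ℕ) : ℝ)⁻¹ := by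
        rw [one_div]; exact_mod_cast Real.rpow_le_rpow (by positivity) h (by positivity)
    _ = s.card := Real.pow_rpow_inv_natCast (by positivity) (by norm_num)
end
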